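/- (Regularity condition for the population loss) Let U, U★ ∈ ℂ^{D×r} and let R be a unitary r×r matrix attaining min_{R' unitary} ‖U − U★ R'‖_F. If the spectral norm satisfies ‖U − U★R‖ ≤ σ_r(U★)/4, then Re trace((U − U★R)^H·(U U^H − U★ U★^H)·U) ≥ (1/4)·‖U U^H − U★ U★^H‖_F² + (1/20)·‖(U − U★R)·U^H‖_F² + (σ_r(U★)²/4)·‖U − U★R‖_F². -/

import Mathlib

open Matrix
open scoped BigOperators ComplexOrder

/-- Frobenius norm of a complex matrix. -/
noncomputable def frobNorm {m n : ℕ} (A : Matrix (Fin m) (Fin n) ℂ) : ℝ :=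
  Real.sqrt (∑ i, ∑ j, ‖A i j‖ ^ 2)

/-- Spectral norm (largest singular value) of a complex matrix, as the operator
norm of the induced map between Euclidean spaces. -/
noncomputable def specNorm {m n : ℕ} (A : Matrix (Fin m) (Fin n) ℂ) : ℝ :=
  ‖LinearMap.toContinuousLinearMap (Matrix.toEuclideanLin A)‖

/-- The measurement map `𝒜(ρ)_k = trace (A k * ρ)` satisfies the `(s, δ)`-RIP. -/
def IsRIP {D K : ℕ} (A : Fin K → Matrix (Fin D) (Fin D) ℂ) (s : ℕ) (δ : ℝ) : Prop :=
  ∀ ρ : Matrix (Fin D) (Fin D) ℂ, ρ.rank ≤ s →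
    (1 - δ) * frobNorm ρ ^ 2 ≤ ((D : ℝ) / (K : ℝ)) * ∑ k, ‖Matrix.trace (A k * ρ)‖ ^ 2 ∧
      ((D : ℝ) / (K : ℝ)) * ∑ k, ‖Matrix.trace (A k * ρ)‖ ^ 2 ≤ (1 + δ) * frobNorm ρ ^ 2

/-- The adjoint of the measurement map: `𝒜*(e) = Σ_k e_k A_k`. -/
noncomputable def adjointMap {D K : ℕ} (A : Fin K → Matrix (Fin D) (Fin D) ℂ)
    (e : Fin K → ℝ) : Matrix (Fin D) (Fin D) ℂ :=
  ∑ k, (e k : ℂ) • A k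

/-- The Wirtinger gradient `G(U) = (D/K) Σ_k (trace(A_k U Uᴴ) − ŷ_k) A_k U`. -/
noncomputable def wGrad {D K r : ℕ} (A : Fin K → Matrix (Fin D) (Fin D) ℂ)
    (yhat : Fin K → ℝ) (U : Matrix (Fin D) (Fin r) ℂ) : Matrix (Fin D) (Fin r) ℂ :=
  ((D : ℂ) / (K : ℂ)) • ∑ k, (Matrix.trace (A k * (U * Uᴴ)) - (yhat k : ℂ)) • (A k * U)

/-- The Wirtinger Hessian quadratic form at `U` in direction `Δ`. -/
noncomputable def wHess {D K r : ℕ} (A : Fin K → Matrix (Fin D) (Fin D) ℂ)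
    (yhat : Fin K → ℝ) (U Δ : Matrix (Fin D) (Fin r) ℂ) : ℝ :=
  (2 * (D : ℝ) / (K : ℝ)) * ∑ k, (‖Matrix.trace (A k * (U * Δᴴ))‖ ^ 2
      + ((Matrix.trace (A k * (U * Δᴴ))) ^ 2).re)
    + (2 * (D : ℝ) / (K : ℝ)) *
      (Matrix.trace ((∑ k, (Matrix.trace (A k * (U * Uᴴ)) - (yhat k : ℂ)) • A k)
        * (Δ * Δᴴ))).re

/-- The function `h(δ)` from the recovery-error bound. -/
noncomputable def hfun (δ : ℝ) : ℝ :=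
  (Real.sqrt 2 + Real.sqrt (82.55 - 762.54 * δ - 843.09 * δ ^ 2)) / (1.5 - 15.7 * δ)

/-- The smallest singular value `σ_r(X)`: the square root of the smallest
eigenvalue of `Xᴴ X`. -/
noncomputable def sigmaMin {D r : ℕ} (X : Matrix (Fin D) (Fin r) ℂ) : ℝ :=
  Real.sqrt (⨅ i : Fin r, (Matrix.isHermitian_conjTranspose_mul_self X).eigenvalues i)

/-!
Write `V = U★R` and `Δ = U - V`. As `R` is unitary, `VVᴴ = U★U★ᴴ`, and minimality of `R` makes
`VᴴU` positive semidefinite (otherwise a rank-one phase rotation of `R` would decrease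
`‖U - U★R‖_F`); in particular `N = UᴴΔ` is Hermitian. Trace algebra then expresses both the
left-hand trace and `‖UUᴴ - VVᴴ‖_F²` through `‖ΔUᴴ‖_F`, `‖VΔᴴ‖_F`, `‖N‖_F`, `‖ΔΔᴴ‖_F` and
`τ = Re tr(N ΔᴴΔ)`. With `s = σ_r(U★) ‖Δ‖_F` one has `‖VΔᴴ‖_F ≥ s`, and `‖Δ‖ ≤ σ_r(U★)/4` gives
`‖ΔΔᴴ‖_F ≤ s/4`, hence `‖ΔUᴴ‖_F ≥ 3s/4`, and `τ ≥ -‖N‖_F s/4`; what remains is a positive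
definite quadratic form in `s` and `‖N‖_F`.
-/

open scoped InnerProductSpace MatrixOrder Matrix.Norms.L2Operator

section Trace

variable {ι κ : Type*} [Fintype ι] [Fintype κ]

lemma re_trace_conjTranspose (A : Matrix ι ι ℂ) : (trace Aᴴ).re = (trace A).re := by
  rw [trace_conjTranspose]
  rfl

lemma re_trace_conjTranspose_mul_symm (A B : Matrix ι κ ℂ) :
    (trace (Aᴴ * B)).re = (trace (Bᴴ * A)).re := by
  rw [← re_trace_conjTranspose, conjTranspose_mul, conjTranspose_conjTranspose]

end Trace

section Frobenius

variable {l m n : ℕ}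

noncomputable def frobVec (A : Matrix (Fin m) (Fin n) ℂ) : EuclideanSpace ℂ (Fin n × Fin m) :=
  WithLp.toLp 2 A.vec

lemma frobVec_add (A B : Matrix (Fin m) (Fin n) ℂ) : frobVec (A + B) = frobVec A + frobVec B :=
  rfl

lemma frobVec_sub (A B : Matrix (Fin m) (Fin n) ℂ) : frobVec (A - B) = frobVec A - frobVec B :=
  rfl

lemma norm_frobVec (A : Matrix (Fin m) (Fin n) ℂ) : ‖frobVec A‖ = frobNorm A := by
  rw [EuclideanSpace.norm_eq, frobNorm, Fintype.sum_prod_type, Finset.sum_comm]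
  rfl

lemma inner_frobVec (A B : Matrix (Fin m) (Fin n) ℂ) :
    ⟪frobVec A, frobVec B⟫_ℂ = trace (Aᴴ * B) := by
  rw [frobVec, frobVec, EuclideanSpace.inner_toLp_toLp, dotProduct_comm, star_vec_dotProduct_vec]

lemma frobNorm_nonneg (A : Matrix (Fin m) (Fin n) ℂ) : 0 ≤ frobNorm A :=
  Real.sqrt_nonneg _

lemma frobNorm_sq (A : Matrix (Fin m) (Fin n) ℂ) : frobNorm A ^ 2 = (trace (Aᴴ * A)).re := by
  rw [← norm_frobVec, ← inner_frobVec, norm_sq_eq_re_inner (𝕜 := ℂ)]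
  rfl

lemma frobNorm_sub_sq (A B : Matrix (Fin m) (Fin n) ℂ) :
    frobNorm (A - B) ^ 2 = frobNorm A ^ 2 - 2 * (trace (Aᴴ * B)).re + frobNorm B ^ 2 := by
  rw [← norm_frobVec, ← norm_frobVec, ← norm_frobVec, ← inner_frobVec, frobVec_sub]
  exact norm_sub_sq (𝕜 := ℂ) _ _

lemma frobNorm_add_sq (A B : Matrix (Fin m) (Fin n) ℂ) :
    frobNorm (A + B) ^ 2 = frobNorm A ^ 2 + 2 * (trace (Aᴴ * B)).re + frobNorm B ^ 2 := by
  rw [← norm_frobVec, ← norm_frobVec, ← norm_frobVec, ← inner_frobVec, frobVec_add]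
  exact norm_add_sq (𝕜 := ℂ) _ _

lemma frobNorm_sub_le (A B : Matrix (Fin m) (Fin n) ℂ) :
    frobNorm (A - B) ≤ frobNorm A + frobNorm B := by
  rw [← norm_frobVec, ← norm_frobVec, ← norm_frobVec, frobVec_sub]
  exact norm_sub_le _ _

lemma abs_re_trace_le (A B : Matrix (Fin m) (Fin n) ℂ) :
    |(trace (Aᴴ * B)).re| ≤ frobNorm A * frobNorm B := by
  rw [← norm_frobVec, ← norm_frobVec, ← inner_frobVec]
  exact (Complex.abs_re_le_norm _).trans (norm_inner_le_norm _ _)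

lemma frobNorm_conjTranspose (A : Matrix (Fin m) (Fin n) ℂ) : frobNorm Aᴴ = frobNorm A := by
  rw [frobNorm, frobNorm, Finset.sum_comm]
  simp

lemma frobNorm_unitary_mul {W : Matrix (Fin m) (Fin m) ℂ} (hW : Wᴴ * W = 1)
    (A : Matrix (Fin m) (Fin n) ℂ) : frobNorm (W * A) = frobNorm A := by
  rw [← sq_eq_sq₀ (frobNorm_nonneg _) (frobNorm_nonneg _), frobNorm_sq, frobNorm_sq,
    conjTranspose_mul, Matrix.mul_assoc, ← Matrix.mul_assoc Wᴴ, hW, Matrix.one_mul]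

lemma frobNorm_mul_unitary {W : Matrix (Fin n) (Fin n) ℂ} (hW : W * Wᴴ = 1)
    (A : Matrix (Fin m) (Fin n) ℂ) : frobNorm (A * W) = frobNorm A := by
  rw [← frobNorm_conjTranspose, conjTranspose_mul,
    frobNorm_unitary_mul (by rwa [conjTranspose_conjTranspose]), frobNorm_conjTranspose]

lemma re_trace_conjTranspose_mul_mono {M N : Matrix (Fin m) (Fin m) ℂ} (h : M ≤ N)
    (B : Matrix (Fin m) (Fin n) ℂ) : (trace (Bᴴ * M * B)).re ≤ (trace (Bᴴ * N * B)).re := by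
  have hpos := ((le_iff.mp h).conjTranspose_mul_mul_same B).trace_nonneg
  rw [Matrix.mul_sub, Matrix.sub_mul, trace_sub] at hpos
  simpa using Complex.re_le_re hpos

lemma re_trace_conjTranspose_mul_algebraMap_mul (c : ℝ) (B : Matrix (Fin m) (Fin n) ℂ) :
    (trace (Bᴴ * algebraMap ℝ (Matrix (Fin m) (Fin m) ℂ) c * B)).re = c * frobNorm B ^ 2 := by
  rw [frobNorm_sq, Algebra.algebraMap_eq_smul_one, Matrix.mul_smul, Matrix.mul_one,
    Matrix.smul_mul, trace_smul, Complex.real_smul, Complex.re_ofReal_mul]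

lemma frobNorm_mul_sq (A : Matrix (Fin l) (Fin m) ℂ) (B : Matrix (Fin m) (Fin n) ℂ) :
    frobNorm (A * B) ^ 2 = (trace (Bᴴ * (Aᴴ * A) * B)).re := by
  rw [frobNorm_sq, conjTranspose_mul]
  simp only [Matrix.mul_assoc]

lemma specNorm_eq_l2_opNorm (A : Matrix (Fin m) (Fin n) ℂ) : specNorm A = ‖A‖ := rfl

lemma specNorm_nonneg (A : Matrix (Fin m) (Fin n) ℂ) : 0 ≤ specNorm A := norm_nonneg _

lemma specNorm_conjTranspose (A : Matrix (Fin m) (Fin n) ℂ) : specNorm Aᴴ = specNorm A :=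
  l2_opNorm_conjTranspose A

lemma frobNorm_mul_le (A : Matrix (Fin l) (Fin m) ℂ) (B : Matrix (Fin m) (Fin n) ℂ) :
    frobNorm (A * B) ≤ specNorm A * frobNorm B := by
  have hA : Aᴴ * A ≤ algebraMap ℝ _ (specNorm A ^ 2) := by
    rw [specNorm_eq_l2_opNorm, sq, ← l2_opNorm_conjTranspose_mul_self]
    exact IsSelfAdjoint.le_algebraMap_norm_self (isHermitian_conjTranspose_mul_self A)
  rw [← pow_le_pow_iff_left₀ (frobNorm_nonneg _)
    (mul_nonneg (specNorm_nonneg A) (frobNorm_nonneg _)) two_ne_zero, mul_pow, frobNorm_mul_sq,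
    ← re_trace_conjTranspose_mul_algebraMap_mul]
  exact re_trace_conjTranspose_mul_mono hA B

end Frobenius

section SmallestSingularValue

variable {D r n : ℕ}

lemma sigmaMin_nonneg (X : Matrix (Fin D) (Fin r) ℂ) : 0 ≤ sigmaMin X :=
  Real.sqrt_nonneg _

lemma sigmaMin_sq_le_eigenvalues (X : Matrix (Fin D) (Fin r) ℂ) (i : Fin r) :
    sigmaMin X ^ 2 ≤ (isHermitian_conjTranspose_mul_self X).eigenvalues i := by
  have : Nonempty (Fin r) := ⟨i⟩
  rw [sigmaMin, Real.sq_sqrt (le_ciInf (eigenvalues_conjTranspose_mul_self_nonneg X))]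
  exact ciInf_le (Set.finite_range _).bddBelow i

lemma algebraMap_sigmaMin_sq_le (X : Matrix (Fin D) (Fin r) ℂ) :
    algebraMap ℝ (Matrix (Fin r) (Fin r) ℂ) (sigmaMin X ^ 2) ≤ Xᴴ * X := by
  rw [algebraMap_le_iff_le_spectrum (isHermitian_conjTranspose_mul_self X).isSelfAdjoint,
    (isHermitian_conjTranspose_mul_self X).spectrum_real_eq_range_eigenvalues]
  rintro _ ⟨i, rfl⟩
  exact sigmaMin_sq_le_eigenvalues X i

lemma sigmaMin_mul_frobNorm_le (X : Matrix (Fin D) (Fin r) ℂ) (B : Matrix (Fin r) (Fin n) ℂ) :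
    sigmaMin X * frobNorm B ≤ frobNorm (X * B) := by
  rw [← pow_le_pow_iff_left₀ (mul_nonneg (sigmaMin_nonneg X) (frobNorm_nonneg _))
    (frobNorm_nonneg _) two_ne_zero, mul_pow, frobNorm_mul_sq,
    ← re_trace_conjTranspose_mul_algebraMap_mul]
  exact re_trace_conjTranspose_mul_mono (algebraMap_sigmaMin_sq_le X) B

end SmallestSingularValue

section OptimalRotation

variable {ι : Type*} [Fintype ι] [DecidableEq ι]

lemma Matrix.posSemidef_of_forall_nonneg_dotProduct_mulVec {M : Matrix ι ι ℂ}
    (h : ∀ x, 0 ≤ star x ⬝ᵥ (M *ᵥ x)) : M.PosSemidef := by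
  rw [← isPositive_toEuclideanLin_iff, LinearMap.isPositive_iff_complex]
  intro x
  have hx : 0 ≤ ⟪toEuclideanLin M x, x⟫_ℂ := by
    rw [EuclideanSpace.inner_eq_star_dotProduct, dotProduct_comm, star_dotProduct,
      star_nonneg_iff]
    exact h x.ofLp
  exact ⟨(Complex.eq_re_of_ofReal_le (r := 0) hx).symm, (Complex.nonneg_iff.mp hx).1⟩

lemma one_sub_smul_vecMulVec_mem_unitaryGroup {v : ι → ℂ} (hv : star v ⬝ᵥ v = 1) {c : ℂ}
    (hc : star c * c = 1) : 1 - (1 - c) • vecMulVec v (star v) ∈ unitaryGroup ι ℂ := by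
  set P := vecMulVec v (star v)
  have hP : Pᴴ = P := by rw [conjTranspose_vecMulVec, star_star]
  have hPP : P * P = P := by rw [vecMulVec_mul_vecMulVec, hv, one_smul]
  rw [mem_unitaryGroup_iff', star_eq_conjTranspose, conjTranspose_sub, conjTranspose_smul,
    conjTranspose_one, hP]
  simp only [sub_mul, mul_sub, one_mul, mul_one, smul_mul_assoc, mul_smul_comm, hPP, star_sub,
    star_one]
  linear_combination (norm := module) hc • P

lemma nonneg_dotProduct_mulVec_of_forall_re_trace_le {M : Matrix ι ι ℂ}
    (hM : ∀ W ∈ unitaryGroup ι ℂ, (trace (star W * M)).re ≤ (trace M).re) {v : ι → ℂ}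
    (hv : star v ⬝ᵥ v = 1) : 0 ≤ star v ⬝ᵥ (M *ᵥ v) := by
  set q := star v ⬝ᵥ (M *ᵥ v)
  set c := Complex.exp (q.arg * Complex.I)
  have hc : star c * c = 1 := by
    rw [Complex.star_def, Complex.conj_mul', Complex.norm_exp_ofReal_mul_I]
    norm_num
  have hcq : star c * q = ‖q‖ := by
    conv_lhs => rw [← Complex.norm_mul_exp_arg_mul_I q]
    rw [mul_left_comm, hc, mul_one]
  have htr : trace (vecMulVec v (star v) * M) = q := by
    rw [vecMulVec_mul, trace_vecMulVec, dotProduct_comm, ← dotProduct_mulVec]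
  -- for `W = 1 - (1 - c) v vᴴ` this reads `Re tr M - Re q + ‖q‖ ≤ Re tr M`
  have hW := hM _ (one_sub_smul_vecMulVec_mem_unitaryGroup hv hc)
  rw [star_eq_conjTranspose, conjTranspose_sub, conjTranspose_one, conjTranspose_smul,
    conjTranspose_vecMulVec, star_star, sub_mul, one_mul, smul_mul_assoc, trace_sub, trace_smul,
    htr, smul_eq_mul, star_sub, star_one, sub_mul, one_mul, hcq] at hW
  have hre : q.re = ‖q‖ := le_antisymm (Complex.re_le_norm q) (by simpa using hW)
  exact Complex.re_eq_norm.mp hre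

theorem Matrix.posSemidef_of_forall_re_trace_le {M : Matrix ι ι ℂ}
    (hM : ∀ W ∈ unitaryGroup ι ℂ, (trace (star W * M)).re ≤ (trace M).re) :
    M.PosSemidef := by
  refine posSemidef_of_forall_nonneg_dotProduct_mulVec fun x => ?_
  rcases eq_or_ne x 0 with rfl | hx
  · simp
  set s : ℝ := ‖WithLp.toLp 2 x‖
  have hs : s ≠ 0 := by simpa [s] using hx
  have hss : star x ⬝ᵥ x = (s : ℂ) ^ 2 := by
    rw [dotProduct_comm, ← EuclideanSpace.inner_toLp_toLp, inner_self_eq_norm_sq_to_K]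
    rfl
  have hunit : star ((s⁻¹ : ℂ) • x) ⬝ᵥ ((s⁻¹ : ℂ) • x) = 1 := by
    rw [star_smul, smul_dotProduct, dotProduct_smul, hss, Complex.star_def, map_inv₀,
      Complex.conj_ofReal, smul_eq_mul, smul_eq_mul]
    field_simp
  have hq := nonneg_dotProduct_mulVec_of_forall_re_trace_le hM hunit
  rw [star_smul, mulVec_smul, smul_dotProduct, dotProduct_smul, Complex.star_def, map_inv₀,
    Complex.conj_ofReal, smul_eq_mul, smul_eq_mul, ← mul_assoc, ← mul_inv] at hq
  have hs2 : (0 : ℂ) ≤ s * s := by exact_mod_cast mul_self_nonneg s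
  calc 0 ≤ (s * s : ℂ) * ((s * s : ℂ)⁻¹ * (star x ⬝ᵥ (M *ᵥ x))) := mul_nonneg hs2 hq
    _ = star x ⬝ᵥ (M *ᵥ x) := by field_simp

end OptimalRotation

theorem Matrix.posSemidef_conjTranspose_mul_of_forall_frobNorm_le {D r : ℕ}
    {U X : Matrix (Fin D) (Fin r) ℂ} {R : Matrix (Fin r) (Fin r) ℂ} (hR : Rᴴ * R = 1)
    (hmin : ∀ R' : Matrix (Fin r) (Fin r) ℂ, R'ᴴ * R' = 1 →
      frobNorm (U - X * R) ≤ frobNorm (U - X * R')) :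
    ((X * R)ᴴ * U).PosSemidef := by
  refine posSemidef_of_forall_re_trace_le fun W hW => ?_
  rw [mem_unitaryGroup_iff', star_eq_conjTranspose] at hW
  have hRW : (R * W)ᴴ * (R * W) = 1 := by
    rw [conjTranspose_mul, Matrix.mul_assoc, ← Matrix.mul_assoc Rᴴ, hR, Matrix.one_mul, hW]
  have h := pow_le_pow_left₀ (frobNorm_nonneg _) (hmin _ hRW) 2
  rw [← Matrix.mul_assoc, frobNorm_sub_sq, frobNorm_sub_sq,
    frobNorm_mul_unitary (mul_eq_one_comm.mp hW), re_trace_conjTranspose_mul_symm U,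
    re_trace_conjTranspose_mul_symm U, conjTranspose_mul (X * R), Matrix.mul_assoc] at h
  rw [star_eq_conjTranspose]
  linarith

section Regularity

variable {D r : ℕ} (U V : Matrix (Fin D) (Fin r) ℂ)

lemma re_trace_regularity_eq :
    (trace ((U - V)ᴴ * ((U * Uᴴ - V * Vᴴ) * U))).re
      = frobNorm (U * Uᴴ - V * Vᴴ) ^ 2 / 2
        + (trace (Uᴴ * (U - V) * ((U - V)ᴴ * (U - V)))).re
        - frobNorm ((U - V) * (U - V)ᴴ) ^ 2 / 2 := by
  set Δ := U - V
  set E := U * Uᴴ - V * Vᴴ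
  have hE : E = Δ * Uᴴ + U * Δᴴ - Δ * Δᴴ := by
    simp only [E, Δ, conjTranspose_sub, Matrix.sub_mul, Matrix.mul_sub]
    abel
  have hEH : Eᴴ = E := by simp [E, conjTranspose_sub]
  have hcycle : (trace (Δᴴ * (E * U))).re = (trace (E * (U * Δᴴ))).re := by
    rw [trace_mul_comm, Matrix.mul_assoc]
  have hswap : (trace (E * (Δ * Uᴴ))).re = (trace (E * (U * Δᴴ))).re := by
    rw [← re_trace_conjTranspose, conjTranspose_mul, conjTranspose_mul, hEH,
      conjTranspose_conjTranspose, trace_mul_comm]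
  have hsum : (trace (E * (Δ * Uᴴ))).re + (trace (E * (U * Δᴴ))).re
      = frobNorm E ^ 2 + (trace (E * (Δ * Δᴴ))).re := by
    rw [frobNorm_sq, hEH, ← Complex.add_re, ← Complex.add_re, ← trace_add, ← trace_add,
      ← Matrix.mul_add, ← Matrix.mul_add, hE, sub_add_cancel]
  have hτ₁ : (trace (Δ * Uᴴ * (Δ * Δᴴ))).re = (trace (Uᴴ * Δ * (Δᴴ * Δ))).re := by
    rw [Matrix.mul_assoc, trace_mul_comm]
    simp only [Matrix.mul_assoc]
  have hτ₂ : (trace (U * Δᴴ * (Δ * Δᴴ))).re = (trace (Uᴴ * Δ * (Δᴴ * Δ))).re := by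
    rw [← re_trace_conjTranspose, Matrix.mul_assoc]
    simp only [conjTranspose_mul, conjTranspose_conjTranspose]
    rw [trace_mul_comm]
    simp only [Matrix.mul_assoc]
  have hEΔ : (trace (E * (Δ * Δᴴ))).re
      = 2 * (trace (Uᴴ * Δ * (Δᴴ * Δ))).re - frobNorm (Δ * Δᴴ) ^ 2 := by
    rw [frobNorm_sq, conjTranspose_mul, conjTranspose_conjTranspose, hE, Matrix.sub_mul,
      Matrix.add_mul, trace_sub, trace_add, Complex.sub_re, Complex.add_re, hτ₁, hτ₂]
    ring
  linarith

lemma frobNorm_mul_conjTranspose_sub_sq_of_isHermitian (hM : (Vᴴ * U).IsHermitian) :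
    frobNorm (U * Uᴴ - V * Vᴴ) ^ 2
      = frobNorm ((U - V) * Uᴴ) ^ 2 + frobNorm (V * (U - V)ᴴ) ^ 2
        + 2 * frobNorm (Uᴴ * (U - V)) ^ 2
        - 2 * (trace (Uᴴ * (U - V) * ((U - V)ᴴ * (U - V)))).re := by
  set Δ := U - V
  set N := Uᴴ * Δ
  have hE : U * Uᴴ - V * Vᴴ = Δ * Uᴴ + V * Δᴴ := by
    simp only [Δ, conjTranspose_sub, Matrix.sub_mul, Matrix.mul_sub]
    abel
  have hΔU : Δᴴ * U = N := by
    have hUV : Uᴴ * V = Vᴴ * U := by simpa using hM.eq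
    simp only [N, Δ, conjTranspose_sub, Matrix.sub_mul, Matrix.mul_sub, hUV]
  have hΔV : Δᴴ * V = N - Δᴴ * Δ := by
    rw [← hΔU, ← Matrix.mul_sub, sub_sub_cancel]
  have hNH : Nᴴ = N := by
    rw [conjTranspose_mul, conjTranspose_conjTranspose, hΔU]
  have hcross : (trace ((Δ * Uᴴ)ᴴ * (V * Δᴴ))).re
      = frobNorm N ^ 2 - (trace (N * (Δᴴ * Δ))).re := by
    rw [conjTranspose_mul, conjTranspose_conjTranspose, Matrix.mul_assoc, trace_mul_comm,
      ← Matrix.mul_assoc Δᴴ V, Matrix.mul_assoc (Δᴴ * V), hΔU, hΔV, Matrix.sub_mul,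
      trace_sub, Complex.sub_re, frobNorm_sq, hNH, trace_mul_comm (Δᴴ * Δ)]
  rw [hE, frobNorm_add_sq, hcross]
  ring

theorem re_trace_regularity_of_isHermitian {σ : ℝ} (hM : (Vᴴ * U).IsHermitian)
    (hσ : σ * frobNorm (U - V) ≤ frobNorm (V * (U - V)ᴴ))
    (hclose : specNorm (U - V) ≤ σ / 4) :
    1 / 4 * frobNorm (U * Uᴴ - V * Vᴴ) ^ 2 + 1 / 20 * frobNorm ((U - V) * Uᴴ) ^ 2
        + σ ^ 2 / 4 * frobNorm (U - V) ^ 2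
      ≤ (trace ((U - V)ᴴ * ((U * Uᴴ - V * Vᴴ) * U))).re := by
  rw [re_trace_regularity_eq, frobNorm_mul_conjTranspose_sub_sq_of_isHermitian U V hM]
  set Δ := U - V
  have hσ0 : 0 ≤ σ := by linarith [specNorm_nonneg Δ]
  have hw : frobNorm (Δ * Δᴴ) ≤ σ / 4 * frobNorm Δ :=
    (frobNorm_mul_le _ _).trans <| by
      rw [frobNorm_conjTranspose]; exact mul_le_mul_of_nonneg_right hclose (frobNorm_nonneg _)
  have hq : frobNorm (Δᴴ * Δ) ≤ σ / 4 * frobNorm Δ :=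
    (frobNorm_mul_le _ _).trans <| by
      rw [specNorm_conjTranspose]; exact mul_le_mul_of_nonneg_right hclose (frobNorm_nonneg _)
  have ht : frobNorm (V * Δᴴ) ≤ frobNorm (Δ * Uᴴ) + frobNorm (Δ * Δᴴ) := by
    have hVΔ : V * Δᴴ = (Δ * Uᴴ - Δ * Δᴴ)ᴴ := by
      simp only [Δ, conjTranspose_sub, conjTranspose_mul, conjTranspose_conjTranspose,
        Matrix.mul_sub, Matrix.sub_mul]
      abel
    rw [hVΔ, frobNorm_conjTranspose]
    exact frobNorm_sub_le _ _
  have hτ : -(frobNorm (Uᴴ * Δ) * (σ / 4 * frobNorm Δ))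
      ≤ (trace (Uᴴ * Δ * (Δᴴ * Δ))).re := by
    have hN : frobNorm (Δᴴ * U) = frobNorm (Uᴴ * Δ) := by
      rw [← frobNorm_conjTranspose, conjTranspose_mul, conjTranspose_conjTranspose]
    have hcs := abs_re_trace_le (Δᴴ * U) (Δᴴ * Δ)
    rw [conjTranspose_mul, conjTranspose_conjTranspose, hN] at hcs
    nlinarith [abs_le.mp hcs, mul_le_mul_of_nonneg_left hq (frobNorm_nonneg (Uᴴ * Δ))]
  have hs : 0 ≤ σ * frobNorm Δ := mul_nonneg hσ0 (frobNorm_nonneg _)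
  have ht2 : 9 / 16 * (σ * frobNorm Δ) ^ 2 ≤ frobNorm (Δ * Uᴴ) ^ 2 := by nlinarith
  have hv2 : (σ * frobNorm Δ) ^ 2 ≤ frobNorm (V * Δᴴ) ^ 2 := by nlinarith
  have hw2 : frobNorm (Δ * Δᴴ) ^ 2 ≤ (σ * frobNorm Δ) ^ 2 / 16 := by
    nlinarith [frobNorm_nonneg (Δ * Δᴴ)]
  nlinarith [sq_nonneg (frobNorm (Uᴴ * Δ) - σ * frobNorm Δ / 8)]

end Regularity

/-- Regularity condition for the population loss. -/
theorem stmt_17 {D r : ℕ} (U Ustar : Matrix (Fin D) (Fin r) ℂ)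
    (R : Matrix (Fin r) (Fin r) ℂ)
    (hRunit : Rᴴ * R = 1)
    (hRmin : ∀ R' : Matrix (Fin r) (Fin r) ℂ, R'ᴴ * R' = 1 →
      frobNorm (U - Ustar * R) ≤ frobNorm (U - Ustar * R'))
    (hclose : specNorm (U - Ustar * R) ≤ sigmaMin Ustar / 4) :
    1 / 4 * frobNorm (U * Uᴴ - Ustar * Ustarᴴ) ^ 2
        + 1 / 20 * frobNorm ((U - Ustar * R) * Uᴴ) ^ 2
        + sigmaMin Ustar ^ 2 / 4 * frobNorm (U - Ustar * R) ^ 2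
      ≤ (Matrix.trace ((U - Ustar * R)ᴴ * ((U * Uᴴ - Ustar * Ustarᴴ) * U))).re := by
  have hVV : Ustar * R * (Ustar * R)ᴴ = Ustar * Ustarᴴ := by
    rw [conjTranspose_mul, Matrix.mul_assoc, ← Matrix.mul_assoc R, mul_eq_one_comm.mp hRunit,
      Matrix.one_mul]
  have hσ : sigmaMin Ustar * frobNorm (U - Ustar * R)
      ≤ frobNorm (Ustar * R * (U - Ustar * R)ᴴ) :=
    calc sigmaMin Ustar * frobNorm (U - Ustar * R)
        = sigmaMin Ustar * frobNorm (R * (U - Ustar * R)ᴴ) := by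
          rw [frobNorm_unitary_mul hRunit, frobNorm_conjTranspose]
      _ ≤ frobNorm (Ustar * R * (U - Ustar * R)ᴴ) := by
          rw [Matrix.mul_assoc]; exact sigmaMin_mul_frobNorm_le _ _
  rw [← hVV]
  exact re_trace_regularity_of_isHermitian U (Ustar * R)
    (posSemidef_conjTranspose_mul_of_forall_frobNorm_le hRunit hRmin).isHermitian hσ hclose
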